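/- (Huber's ε-contamination model as a special case of the band model.) Let (Ω, 𝔉, μ) be a σ-finite measure space and let p'₀, p'₁ : Ω → ℝ be nonnegative, measurable and integrable. Let c₀, c₁ > 0 and suppose q₀, q₁ are μ-densities satisfying μ-a.e. q₀ = max(c₀·q₁, p'₀) and q₁ = max(c₁·q₀, p'₁). Then for every λ ≥ 0 and all μ-densities p₀, p₁ with p₀ ≥ p'₀ μ-a.e. and p₁ ≥ p'₁ μ-a.e.: ∫ min(p₀, λ·p₁) dμ ≤ ∫ min(q₀, λ·q₁) dμ. -/

import Mathlib

/-!
Let `A = {q₀ ≤ λ q₁}`. For any densities, `∫ min(p₀, λ p₁) ≤ ∫_A p₀ + λ ∫_{Aᶜ} p₁`, with equality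
for `(q₀, q₁)`, so it suffices that `q₀` carries at least as much mass as `p₀` on `A` and `q₁` at
least as much as `p₁` on `Aᶜ`. When `c₀ < λ < 1 / c₁` the fixed-point equations force `q₀ = p'₀`
on `Aᶜ` and `q₁ = p'₁` on `A`, so there `qᵢ` is the smallest admissible density and, the total
masses being equal, `qᵢ` wins on the complementary set. When `λ ≤ c₀` (resp. `λ c₁ ≥ 1`) the
same comparison works with `A = ∅` (resp. `A = univ`).
-/

open MeasureTheory

section SplitIntegral

variable {Ω : Type*} [MeasurableSpace Ω] {μ : Measure Ω} {A : Set Ω} {f g f₀ f₁ g₀ g₁ : Ω → ℝ}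

theorem integral_min_le_setIntegral_add_setIntegral_compl (hA : MeasurableSet A)
    (hf : Integrable f μ) (hg : Integrable g μ) :
    ∫ ω, min (f ω) (g ω) ∂μ ≤ ∫ ω in A, f ω ∂μ + ∫ ω in Aᶜ, g ω ∂μ := by
  have hfg : Integrable (fun ω => min (f ω) (g ω)) μ := hf.inf hg
  rw [← integral_add_compl hA hfg]
  exact add_le_add
    (setIntegral_mono hfg.integrableOn hf.integrableOn fun _ => min_le_left _ _)
    (setIntegral_mono hfg.integrableOn hg.integrableOn fun _ => min_le_right _ _)

theorem integral_min_eq_setIntegral_add_setIntegral_compl (hA : MeasurableSet A)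
    (hf : Integrable f μ) (hg : Integrable g μ)
    (hfg : ∀ᵐ ω ∂μ, ω ∈ A → f ω ≤ g ω) (hgf : ∀ᵐ ω ∂μ, ω ∈ Aᶜ → g ω ≤ f ω) :
    ∫ ω, min (f ω) (g ω) ∂μ = ∫ ω in A, f ω ∂μ + ∫ ω in Aᶜ, g ω ∂μ := by
  rw [← integral_add_compl hA (show Integrable (fun ω => min (f ω) (g ω)) μ from hf.inf hg)]
  congr 1
  · exact setIntegral_congr_ae hA (hfg.mono fun _ h hω => min_eq_left (h hω))
  · exact setIntegral_congr_ae hA.compl (hgf.mono fun _ h hω => min_eq_right (h hω))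

theorem setIntegral_le_of_integral_le_of_le_on_compl (hA : MeasurableSet A)
    (hf : Integrable f μ) (hg : Integrable g μ) (hfg : ∫ ω, f ω ∂μ ≤ ∫ ω, g ω ∂μ)
    (hgf : ∀ᵐ ω ∂μ, ω ∈ Aᶜ → g ω ≤ f ω) :
    ∫ ω in A, f ω ∂μ ≤ ∫ ω in A, g ω ∂μ := by
  have hc : ∫ ω in Aᶜ, g ω ∂μ ≤ ∫ ω in Aᶜ, f ω ∂μ :=
    setIntegral_mono_on_ae hg.integrableOn hf.integrableOn hA.compl hgf
  rw [← integral_add_compl hA hf, ← integral_add_compl hA hg] at hfg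
  linarith

theorem integral_min_mul_le_of_setIntegral_le {lam : ℝ} (hlam : 0 ≤ lam)
    (hf₀ : Integrable f₀ μ) (hf₁ : Integrable f₁ μ) (hg₀ : Integrable g₀ μ)
    (hg₁ : Integrable g₁ μ) (hA : MeasurableSet A)
    (hgA : ∀ᵐ ω ∂μ, ω ∈ A → g₀ ω ≤ lam * g₁ ω) (hgAc : ∀ᵐ ω ∂μ, ω ∈ Aᶜ → lam * g₁ ω ≤ g₀ ω)
    (h₀ : ∫ ω in A, f₀ ω ∂μ ≤ ∫ ω in A, g₀ ω ∂μ)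
    (h₁ : ∫ ω in Aᶜ, f₁ ω ∂μ ≤ ∫ ω in Aᶜ, g₁ ω ∂μ) :
    ∫ ω, min (f₀ ω) (lam * f₁ ω) ∂μ ≤ ∫ ω, min (g₀ ω) (lam * g₁ ω) ∂μ := by
  calc ∫ ω, min (f₀ ω) (lam * f₁ ω) ∂μ
      ≤ ∫ ω in A, f₀ ω ∂μ + ∫ ω in Aᶜ, lam * f₁ ω ∂μ :=
        integral_min_le_setIntegral_add_setIntegral_compl hA hf₀ (hf₁.const_mul lam)
    _ ≤ ∫ ω in A, g₀ ω ∂μ + ∫ ω in Aᶜ, lam * g₁ ω ∂μ := by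
        rw [integral_const_mul, integral_const_mul]
        gcongr
    _ = ∫ ω, min (g₀ ω) (lam * g₁ ω) ∂μ :=
        (integral_min_eq_setIntegral_add_setIntegral_compl hA hg₀ (hg₁.const_mul lam)
          hgA hgAc).symm

end SplitIntegral

theorem max_mul_eq_right_of_mul_lt {b c lam p : ℝ} (hb : 0 ≤ b) (hc : c ≤ lam)
    (h : lam * b < max (c * b) p) : max (c * b) p = p := by
  refine max_eq_right (le_of_not_gt fun hp => ?_)
  rw [max_eq_left hp.le] at h
  nlinarith

theorem max_mul_eq_right_of_le_mul {a c lam p : ℝ} (ha : 0 ≤ a) (hp : 0 ≤ p) (hc : lam * c < 1)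
    (h : a ≤ lam * max (c * a) p) : max (c * a) p = p := by
  refine max_eq_right (le_of_not_gt fun hp' => ?_)
  rw [max_eq_left hp'.le] at h
  have ha' : 0 < a := ha.lt_of_ne fun h0 => by simp [← h0] at hp'; linarith
  nlinarith [mul_pos ha' (sub_pos.2 hc)]

theorem huber_special_case_general {Ω : Type*} [MeasurableSpace Ω]
    (μ : Measure Ω)
    (p'₀ p'₁ : Ω → ℝ)
    (h₁nonneg : ∀ ω, 0 ≤ p'₁ ω)
    (c₀ c₁ : ℝ)
    (q₀ q₁ : Ω → ℝ)
    (hq₀m : Measurable q₀) (hq₀nonneg : ∀ ω, 0 ≤ q₀ ω)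
    (hq₀int : Integrable q₀ μ) (hq₀one : ∫ ω, q₀ ω ∂μ = 1)
    (hq₁m : Measurable q₁) (hq₁nonneg : ∀ ω, 0 ≤ q₁ ω)
    (hq₁int : Integrable q₁ μ) (hq₁one : ∫ ω, q₁ ω ∂μ = 1)
    (hfix₀ : ∀ᵐ ω ∂μ, q₀ ω = max (c₀ * q₁ ω) (p'₀ ω))
    (hfix₁ : ∀ᵐ ω ∂μ, q₁ ω = max (c₁ * q₀ ω) (p'₁ ω))
    (lam : ℝ) (hlam : 0 ≤ lam)
    (p₀ p₁ : Ω → ℝ)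
    (hp₀int : Integrable p₀ μ) (hp₀one : ∫ ω, p₀ ω ∂μ = 1)
    (hp₀band : ∀ᵐ ω ∂μ, p'₀ ω ≤ p₀ ω)
    (hp₁int : Integrable p₁ μ) (hp₁one : ∫ ω, p₁ ω ∂μ = 1)
    (hp₁band : ∀ᵐ ω ∂μ, p'₁ ω ≤ p₁ ω) :
    ∫ ω, min (p₀ ω) (lam * p₁ ω) ∂μ ≤ ∫ ω, min (q₀ ω) (lam * q₁ ω) ∂μ := by
  have split (A : Set Ω) (hA : MeasurableSet A) :=
    integral_min_mul_le_of_setIntegral_le hlam hp₀int hp₁int hq₀int hq₁int hA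
  rcases le_or_gt lam c₀ with hlc₀ | hc₀lam
  · refine split _ MeasurableSet.empty (by simp) ?_ (by simp) (by simp [hp₁one, hq₁one])
    filter_upwards [hfix₀] with ω h _
    rw [h]
    exact (mul_le_mul_of_nonneg_right hlc₀ (hq₁nonneg ω)).trans (le_max_left _ _)
  rcases le_or_gt 1 (lam * c₁) with hlc₁ | hlc₁
  · refine split _ MeasurableSet.univ ?_ (by simp) (by simp [hp₀one, hq₀one]) (by simp)
    filter_upwards [hfix₁] with ω h _
    rw [h]
    nlinarith [le_max_left (c₁ * q₀ ω) (p'₁ ω), hq₀nonneg ω]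
  have hA : MeasurableSet {ω | q₀ ω ≤ lam * q₁ ω} := measurableSet_le hq₀m (hq₁m.const_mul lam)
  have hAc : ∀ ω ∈ {ω | q₀ ω ≤ lam * q₁ ω}ᶜ, lam * q₁ ω < q₀ ω := fun _ h => not_le.mp h
  refine split _ hA (ae_of_all _ fun _ h => h) (ae_of_all _ fun ω h => (hAc ω h).le) ?_ ?_
  · refine setIntegral_le_of_integral_le_of_le_on_compl hA hp₀int hq₀int
      (hp₀one.trans hq₀one.symm).le ?_
    filter_upwards [hfix₀, hp₀band] with ω h hp hω
    rw [h, max_mul_eq_right_of_mul_lt (hq₁nonneg ω) hc₀lam.le ((hAc ω hω).trans_eq h)]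
    exact hp
  · refine setIntegral_le_of_integral_le_of_le_on_compl hA.compl hp₁int hq₁int
      (hp₁one.trans hq₁one.symm).le ?_
    filter_upwards [hfix₁, hp₁band] with ω h hp hω
    rw [compl_compl] at hω
    rw [h, max_mul_eq_right_of_le_mul (hq₀nonneg ω) (h₁nonneg ω) hlc₁ (h ▸ hω)]
    exact hp

/-- Huber's ε-contamination model as a special case of the band model: the Huber
fixed-point densities are least favorable for the classes `{p : p ≥ p'ᵢ μ-a.e.}`. -/
theorem huber_special_case {Ω : Type*} [MeasurableSpace Ω]
    (μ : Measure Ω) [SigmaFinite μ]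
    (p'₀ p'₁ : Ω → ℝ)
    (hm'₀ : Measurable p'₀) (hm'₁ : Measurable p'₁)
    (h₀nonneg : ∀ ω, 0 ≤ p'₀ ω) (h₁nonneg : ∀ ω, 0 ≤ p'₁ ω)
    (hint'₀ : Integrable p'₀ μ) (hint'₁ : Integrable p'₁ μ)
    (c₀ c₁ : ℝ) (hc₀ : 0 < c₀) (hc₁ : 0 < c₁)
    (q₀ q₁ : Ω → ℝ)
    (hq₀m : Measurable q₀) (hq₀nonneg : ∀ ω, 0 ≤ q₀ ω)
    (hq₀int : Integrable q₀ μ) (hq₀one : ∫ ω, q₀ ω ∂μ = 1)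
    (hq₁m : Measurable q₁) (hq₁nonneg : ∀ ω, 0 ≤ q₁ ω)
    (hq₁int : Integrable q₁ μ) (hq₁one : ∫ ω, q₁ ω ∂μ = 1)
    (hfix₀ : ∀ᵐ ω ∂μ, q₀ ω = max (c₀ * q₁ ω) (p'₀ ω))
    (hfix₁ : ∀ᵐ ω ∂μ, q₁ ω = max (c₁ * q₀ ω) (p'₁ ω))
    (lam : ℝ) (hlam : 0 ≤ lam)
    (p₀ p₁ : Ω → ℝ)
    (hp₀m : Measurable p₀) (hp₀nonneg : ∀ ω, 0 ≤ p₀ ω)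
    (hp₀int : Integrable p₀ μ) (hp₀one : ∫ ω, p₀ ω ∂μ = 1)
    (hp₀band : ∀ᵐ ω ∂μ, p'₀ ω ≤ p₀ ω)
    (hp₁m : Measurable p₁) (hp₁nonneg : ∀ ω, 0 ≤ p₁ ω)
    (hp₁int : Integrable p₁ μ) (hp₁one : ∫ ω, p₁ ω ∂μ = 1)
    (hp₁band : ∀ᵐ ω ∂μ, p'₁ ω ≤ p₁ ω) :
    ∫ ω, min (p₀ ω) (lam * p₁ ω) ∂μ ≤ ∫ ω, min (q₀ ω) (lam * q₁ ω) ∂μ :=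
  huber_special_case_general μ p'₀ p'₁ h₁nonneg c₀ c₁ q₀ q₁ hq₀m hq₀nonneg hq₀int hq₀one hq₁m
    hq₁nonneg hq₁int hq₁one hfix₀ hfix₁ lam hlam p₀ p₁ hp₀int hp₀one hp₀band hp₁int hp₁one hp₁band
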